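/- Let (X, {d_r}) satisfy the weaker d_r-axioms and suppose the family is non-degenerate: if d_r(x,y) = 0 for all r > 0 then x = y. Then there exists a quasi-metric ρ : X × X → [0,∞) — i.e. ρ(x,x) = 0, ρ(x,z) ≤ ρ(x,y) + ρ(y,z), and ρ(x,y) = 0 implies x = y — such that: (i) for all r > 0 and ε > 0 there exists ε' > 0 such that ρ(x,y) < ε' implies d_r(x,y) < ε; and (ii) for every ε > 0 there exist r > 0 and ε' > 0 such that d_r(x,y) < ε' implies ρ(x,y) < ε. -/

import Mathlib

open ENNReal

/-- The weaker `d_r`-axioms for a family of metric-like functions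
`d : ℝ → X → X → ℝ≥0∞` indexed by `r > 0`. -/
structure WeakerDr {X : Type*} (d : ℝ → X → X → ℝ≥0∞) : Prop where
  self : ∀ (x : X) (r : ℝ), 0 < r → d r x x = 0
  mono : ∀ (x y : X) (r₁ r₂ : ℝ), 0 < r₁ → r₁ ≤ r₂ → d r₁ x y ≤ d r₂ x y
  usc : ∀ (x y : X) (r ε : ℝ), 0 < r → 0 < ε → d r x y < ENNReal.ofReal ε →
    ∃ δ : ℝ, 0 < δ ∧ d (r + δ) x y < ENNReal.ofReal ε
  weaker_tri : ∀ (x y z : X) (r₁ r₂ r₃ : ℝ), 0 < r₁ → 0 < r₂ → 0 < r₃ →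
    d (r₁ + r₂ + r₃) x y < ENNReal.ofReal r₃ → d (r₁ + r₂ + r₃) y z < ENNReal.ofReal r₂ →
    d r₁ x z ≤ d (r₁ + r₂ + r₃) x y + d (r₁ + r₂ + r₃) y z

/-- The basic entourage `U_{r,ε} = {(x,y) | d_r(x,y) < ε}`. -/
def entourageDr {X : Type*} (d : ℝ → X → X → ℝ≥0∞) (r ε : ℝ) : Set (X × X) :=
  {p | d r p.1 p.2 < ENNReal.ofReal ε}

/-!
Frink's chain construction, run without symmetry. The weaker triangle inequality lets three steps
in `W (n + 1) = U_{n+2, 8^{-(n+1)}}` compose to a step in `W n = U_{n+1, 8^{-n}}`. Hence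
`f x y = 2^{-n}`, for the first `n` with `(x, y) ∉ W n`, satisfies
`f x₁ x₄ ≤ 2 max (f x₁ x₂, f x₂ x₃, f x₃ x₄)`, and then the infimum `ρ` of the `f`-weights of
chains from `x` to `y` is a quasi-metric with `f / 2 ≤ ρ ≤ f`. Separation follows from
non-degeneracy, since `ρ x y = 0` puts `(x, y)` in every `W n`.
-/

open Finset

section ChainDist

variable {X : Type*}

structure Chain (X : Type*) (x y : X) where
  len : ℕ
  pt : ℕ → X
  pt_zero : pt 0 = x
  pt_len : pt len = y

namespace Chain

variable {x y z : X}

def weight (f : X → X → ℝ) (c : Chain X x y) : ℝ :=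
  ∑ i ∈ range c.len, f (c.pt i) (c.pt (i + 1))

def single (x y : X) : Chain X x y :=
  ⟨1, fun i => if i = 0 then x else y, rfl, rfl⟩

def append (c : Chain X x y) (c' : Chain X y z) : Chain X x z where
  len := c.len + c'.len
  pt i := if i ≤ c.len then c.pt i else c'.pt (i - c.len)
  pt_zero := by simp [c.pt_zero]
  pt_len := by
    split_ifs with h
    · have hc' : c'.len = 0 := by omega
      rw [hc', add_zero, c.pt_len, ← c'.pt_len, hc', c'.pt_zero]
    · simp [c'.pt_len]

instance : Nonempty (Chain X x y) := ⟨single x y⟩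

theorem weight_nonneg {f : X → X → ℝ} (hf : ∀ x y, 0 ≤ f x y) (c : Chain X x y) :
    0 ≤ c.weight f :=
  sum_nonneg fun _ _ => hf _ _

theorem weight_single (f : X → X → ℝ) (x y : X) : (single x y).weight f = f x y := by
  simp [weight, single]

theorem weight_append (f : X → X → ℝ) (c : Chain X x y) (c' : Chain X y z) :
    (c.append c').weight f = c.weight f + c'.weight f := by
  simp only [weight, append]
  rw [sum_range_add]
  congr 1
  · refine sum_congr rfl fun i hi => ?_
    have := mem_range.1 hi
    rw [if_pos (by omega), if_pos (by omega)]
  · refine sum_congr rfl fun i _ => ?_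
    rw [if_neg (show ¬c.len + i + 1 ≤ c.len by omega), show c.len + i + 1 - c.len = i + 1 by omega]
    congr 1
    split_ifs with h
    · rw [show i = 0 by omega, add_zero, c.pt_len, c'.pt_zero]
    · rw [Nat.add_sub_cancel_left]

end Chain

theorem le_two_mul_sum_of_le_two_mul_max {f : X → X → ℝ} (hf : ∀ x y, 0 ≤ f x y)
    (hself : ∀ x, f x x = 0)
    (h4 : ∀ x₁ x₂ x₃ x₄, f x₁ x₄ ≤ 2 * max (f x₁ x₂) (max (f x₂ x₃) (f x₃ x₄)))
    (n : ℕ) (p : ℕ → X) : f (p 0) (p n) ≤ 2 * ∑ i ∈ range n, f (p i) (p (i + 1)) := by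
  induction n using Nat.strong_induction_on generalizing p with
  | _ n ih =>
  obtain _ | m := n
  · simp [hself]
  set S := ∑ i ∈ range (m + 1), f (p i) (p (i + 1)) with hS_def
  have hS : 0 ≤ S := sum_nonneg fun _ _ => hf _ _
  -- Split at the last vertex `k ≤ m` up to which the chain carries at most half of its weight.
  set P : ℕ → Prop := fun j => 2 * ∑ i ∈ range j, f (p i) (p (i + 1)) ≤ S
  set k := Nat.findGreatest P m
  obtain ⟨r, hr⟩ : ∃ r, m = k + r := Nat.exists_eq_add_of_le (Nat.findGreatest_le m)
  set A := ∑ i ∈ range k, f (p i) (p (i + 1))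
  set B := ∑ i ∈ range r, f (p (k + 1 + i)) (p (k + 1 + i + 1))
  have hsplit : S = A + f (p k) (p (k + 1)) + B := by
    rw [hS_def, hr, show k + r + 1 = k + 1 + r by omega, sum_range_add, sum_range_succ]
  have hA : 2 * A ≤ S := Nat.findGreatest_spec (P := P) (Nat.zero_le m) (by simpa [P] using hS)
  have hB : 2 * B ≤ S := by
    rcases r.eq_zero_or_pos with rfl | hr₀
    · simpa [B] using hS
    · have : ¬P (k + 1) := Nat.findGreatest_is_greatest (n := m) (by omega) (by omega)
      rw [not_le, sum_range_succ] at this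
      linarith
  have hB₀ : 0 ≤ B := sum_nonneg fun _ _ => hf _ _
  have hA₀ : 0 ≤ A := sum_nonneg fun _ _ => hf _ _
  have h₁ : f (p 0) (p k) ≤ S := (ih k (by omega) p).trans hA
  have h₂ : f (p k) (p (k + 1)) ≤ S := by linarith
  have h₃ : f (p (k + 1)) (p (m + 1)) ≤ S := by
    have := ih r (by omega) fun i => p (k + 1 + i)
    simp only [add_zero, ← add_assoc] at this
    rw [hr, show k + r + 1 = k + 1 + r by omega]
    linarith
  calc f (p 0) (p (m + 1)) ≤ 2 * max (f (p 0) (p k)) (max (f (p k) (p (k + 1)))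
        (f (p (k + 1)) (p (m + 1)))) := h4 _ _ _ _
    _ ≤ 2 * S := by gcongr; exact max_le h₁ (max_le h₂ h₃)

theorem Chain.le_two_mul_weight {f : X → X → ℝ} (hf : ∀ x y, 0 ≤ f x y)
    (hself : ∀ x, f x x = 0)
    (h4 : ∀ x₁ x₂ x₃ x₄, f x₁ x₄ ≤ 2 * max (f x₁ x₂) (max (f x₂ x₃) (f x₃ x₄)))
    {x y : X} (c : Chain X x y) : f x y ≤ 2 * c.weight f := by
  have := le_two_mul_sum_of_le_two_mul_max hf hself h4 c.len c.pt
  rwa [c.pt_zero, c.pt_len] at this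

noncomputable def chainDist (f : X → X → ℝ) (x y : X) : ℝ :=
  ⨅ c : Chain X x y, c.weight f

variable {f : X → X → ℝ}

theorem chainDist_nonneg (hf : ∀ x y, 0 ≤ f x y) (x y : X) : 0 ≤ chainDist f x y :=
  le_ciInf fun c => c.weight_nonneg hf

theorem chainDist_le_weight (hf : ∀ x y, 0 ≤ f x y) {x y : X} (c : Chain X x y) :
    chainDist f x y ≤ c.weight f :=
  ciInf_le ⟨0, Set.forall_mem_range.2 fun c => c.weight_nonneg hf⟩ c

theorem chainDist_le (hf : ∀ x y, 0 ≤ f x y) (x y : X) : chainDist f x y ≤ f x y :=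
  (chainDist_le_weight hf (Chain.single x y)).trans_eq (Chain.weight_single f x y)

theorem chainDist_self (hf : ∀ x y, 0 ≤ f x y) (hself : ∀ x, f x x = 0) (x : X) :
    chainDist f x x = 0 :=
  le_antisymm ((chainDist_le hf x x).trans_eq (hself x)) (chainDist_nonneg hf x x)

theorem chainDist_triangle (hf : ∀ x y, 0 ≤ f x y) (x y z : X) :
    chainDist f x z ≤ chainDist f x y + chainDist f y z :=
  le_ciInf_add_ciInf fun c c' =>
    (chainDist_le_weight hf (c.append c')).trans_eq (Chain.weight_append f c c')

theorem le_two_mul_chainDist (hf : ∀ x y, 0 ≤ f x y) (hself : ∀ x, f x x = 0)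
    (h4 : ∀ x₁ x₂ x₃ x₄, f x₁ x₄ ≤ 2 * max (f x₁ x₂) (max (f x₂ x₃) (f x₃ x₄))) (x y : X) :
    f x y ≤ 2 * chainDist f x y := by
  have : f x y / 2 ≤ chainDist f x y :=
    le_ciInf fun c => by linarith [c.le_two_mul_weight hf hself h4]
  linarith

end ChainDist

section LevelDist

variable {X : Type*} {W : ℕ → Set (X × X)} {x y : X}

open Classical in
noncomputable def levelDist (W : ℕ → Set (X × X)) (x y : X) : ℝ :=
  if h : ∃ n, (x, y) ∉ W n then (1 / 2) ^ Nat.find h else 0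

theorem levelDist_nonneg (x y : X) : 0 ≤ levelDist W x y := by
  unfold levelDist
  split_ifs <;> positivity

theorem levelDist_self (hrefl : ∀ n x, (x, x) ∈ W n) (x : X) : levelDist W x x = 0 :=
  dif_neg fun ⟨n, hn⟩ => hn (hrefl n x)

theorem levelDist_eq_zero_or_half_pow (x y : X) :
    levelDist W x y = 0 ∨ ∃ n : ℕ, levelDist W x y = (1 / 2) ^ n := by
  unfold levelDist
  split_ifs
  exacts [.inr ⟨_, rfl⟩, .inl rfl]

theorem levelDist_lt_half_pow_iff (hW : Antitone W) {n : ℕ} :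
    levelDist W x y < (1 / 2) ^ n ↔ (x, y) ∈ W n := by
  classical
  unfold levelDist
  split_ifs with h
  · rw [pow_lt_pow_iff_right_of_lt_one₀ (by norm_num) (by norm_num), Nat.lt_find_iff]
    exact ⟨fun hm => not_not.1 (hm n le_rfl), fun hn m hm => not_not.2 (hW hm hn)⟩
  · simp only [not_exists, not_not] at h
    exact iff_of_true (by positivity) (h n)

theorem levelDist_le_two_mul_max (hW : Antitone W)
    (hcomp : ∀ n x y z w, (x, y) ∈ W (n + 1) → (y, z) ∈ W (n + 1) → (z, w) ∈ W (n + 1) →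
      (x, w) ∈ W n)
    (x₁ x₂ x₃ x₄ : X) :
    levelDist W x₁ x₄ ≤
      2 * max (levelDist W x₁ x₂) (max (levelDist W x₂ x₃) (levelDist W x₃ x₄)) := by
  rcases levelDist_eq_zero_or_half_pow x₁ x₄ with h₀ | ⟨n, hn⟩
  · rw [h₀]
    have := levelDist_nonneg (W := W) x₁ x₂
    positivity
  have h₁₄ : (x₁, x₄) ∉ W n := by
    rw [← levelDist_lt_half_pow_iff hW, hn]
    exact lt_irrefl _
  have : ¬((x₁, x₂) ∈ W (n + 1) ∧ (x₂, x₃) ∈ W (n + 1) ∧ (x₃, x₄) ∈ W (n + 1)) :=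
    fun ⟨h₁₂, h₂₃, h₃₄⟩ => h₁₄ (hcomp n _ _ _ _ h₁₂ h₂₃ h₃₄)
  simp only [← levelDist_lt_half_pow_iff hW, not_and_or, not_lt] at this
  calc levelDist W x₁ x₄ = 2 * ((1 / 2) ^ n * (1 / 2)) := by rw [hn]; ring
    _ ≤ _ := by
      rw [← pow_succ]
      gcongr
      rcases this with h | h | h
      exacts [le_max_of_le_left h, le_max_of_le_right (le_max_of_le_left h),
        le_max_of_le_right (le_max_of_le_right h)]

theorem chainDist_levelDist_lt_of_mem (hW : Antitone W) {n : ℕ} (h : (x, y) ∈ W n) :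
    chainDist (levelDist W) x y < (1 / 2) ^ n :=
  (chainDist_le levelDist_nonneg x y).trans_lt ((levelDist_lt_half_pow_iff hW).2 h)

theorem mem_of_chainDist_levelDist_lt (hW : Antitone W) (hrefl : ∀ n x, (x, x) ∈ W n)
    (hcomp : ∀ n x y z w, (x, y) ∈ W (n + 1) → (y, z) ∈ W (n + 1) → (z, w) ∈ W (n + 1) →
      (x, w) ∈ W n)
    {n : ℕ} (h : chainDist (levelDist W) x y < (1 / 2) ^ (n + 1)) : (x, y) ∈ W n := by
  refine (levelDist_lt_half_pow_iff hW).1 ?_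
  have := le_two_mul_chainDist levelDist_nonneg (levelDist_self hrefl)
    (levelDist_le_two_mul_max hW hcomp) x y
  rw [pow_succ] at h
  linarith

end LevelDist

theorem ENNReal.eq_zero_of_forall_lt_ofReal {a : ℝ≥0∞}
    (h : ∀ ε : ℝ, 0 < ε → a < ENNReal.ofReal ε) : a = 0 := by
  by_contra ha
  obtain ⟨ε, -, hε, hεa⟩ := ENNReal.lt_iff_exists_real_btwn.1 (pos_iff_ne_zero.2 ha)
  exact (h ε (ENNReal.ofReal_pos.1 hε)).not_gt hεa

/-- The radii `n + 1` are unbounded, and the unit gap between consecutive radii absorbs the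
`5 · 8^{-(n+1)}` spent in composing three steps. -/
def entourageSeq {X : Type*} (d : ℝ → X → X → ℝ≥0∞) (n : ℕ) : Set (X × X) :=
  entourageDr d (n + 1) ((1 / 8) ^ n)

namespace WeakerDr

variable {X : Type*} {d : ℝ → X → X → ℝ≥0∞} {x y z w : X}

theorem entourageDr_subset (h : WeakerDr d) {r r' ε ε' : ℝ} (hr : 0 < r) (hrr' : r ≤ r')
    (hε : ε' ≤ ε) : entourageDr d r' ε' ⊆ entourageDr d r ε := fun _ hp =>
  (h.mono _ _ _ _ hr hrr').trans_lt (hp.trans_le (ENNReal.ofReal_le_ofReal hε))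

theorem self_mem_entourageDr (h : WeakerDr d) {r ε : ℝ} (hr : 0 < r) (hε : 0 < ε) (x : X) :
    (x, x) ∈ entourageDr d r ε := by
  simp [entourageDr, h.self x r hr, hε]

theorem mem_entourageDr_of_comp (h : WeakerDr d) {r a b : ℝ} (hr : 0 < r) (ha : 0 < a)
    (hb : 0 < b) (hxy : (x, y) ∈ entourageDr d (r + b + a) a)
    (hyz : (y, z) ∈ entourageDr d (r + b + a) b) : (x, z) ∈ entourageDr d r (a + b) :=
  calc d r x z ≤ d (r + b + a) x y + d (r + b + a) y z :=
        h.weaker_tri x y z r b a hr hb ha hxy hyz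
    _ < ENNReal.ofReal a + ENNReal.ofReal b := ENNReal.add_lt_add hxy hyz
    _ = ENNReal.ofReal (a + b) := (ENNReal.ofReal_add ha.le hb.le).symm

theorem mem_entourageDr_of_comp₃ (h : WeakerDr d) {r e : ℝ} (hr : 0 < r) (he : 0 < e)
    (hxy : (x, y) ∈ entourageDr d (r + 5 * e) e) (hyz : (y, z) ∈ entourageDr d (r + 5 * e) e)
    (hzw : (z, w) ∈ entourageDr d (r + 5 * e) e) : (x, w) ∈ entourageDr d r (3 * e) := by
  rw [show r + 5 * e = r + 3 * e + e + e by ring] at hyz hzw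
  have hyw := h.mem_entourageDr_of_comp (by positivity) he he hyz hzw
  rw [show r + 3 * e = r + (e + e) + e by ring] at hyw
  have hxy' : (x, y) ∈ entourageDr d (r + (e + e) + e) e :=
    h.entourageDr_subset (by positivity) (by linarith) le_rfl hxy
  rw [show 3 * e = e + (e + e) by ring]
  exact h.mem_entourageDr_of_comp hr he (by positivity) hxy' hyw

theorem antitone_entourageSeq (h : WeakerDr d) : Antitone (entourageSeq d) := fun m n hmn =>
  h.entourageDr_subset (by positivity) (by gcongr)
    (pow_le_pow_of_le_one (by norm_num) (by norm_num) hmn)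

theorem self_mem_entourageSeq (h : WeakerDr d) (n : ℕ) (x : X) : (x, x) ∈ entourageSeq d n :=
  h.self_mem_entourageDr (by positivity) (by positivity) x

theorem mem_entourageSeq_of_comp₃ (h : WeakerDr d) (n : ℕ) (x y z w : X)
    (hxy : (x, y) ∈ entourageSeq d (n + 1)) (hyz : (y, z) ∈ entourageSeq d (n + 1))
    (hzw : (z, w) ∈ entourageSeq d (n + 1)) : (x, w) ∈ entourageSeq d n := by
  set e : ℝ := (1 / 8) ^ (n + 1)
  have he : 0 < e := by positivity
  have he₈ : e ≤ 1 / 8 := pow_le_of_le_one (by norm_num) (by norm_num) n.succ_ne_zero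
  have h3e : 3 * e ≤ (1 / 8) ^ n := by
    simp only [e, pow_succ]
    nlinarith [pow_pos (by norm_num : (0 : ℝ) < 1 / 8) n]
  have hsub : entourageSeq d (n + 1) ⊆ entourageDr d ((n + 1 : ℝ) + 5 * e) e :=
    h.entourageDr_subset (by positivity) (by push_cast; linarith) le_rfl
  exact h.entourageDr_subset (by positivity) le_rfl h3e
    (h.mem_entourageDr_of_comp₃ (by positivity) he (hsub hxy) (hsub hyz) (hsub hzw))

theorem exists_entourageSeq_subset (h : WeakerDr d) {r ε : ℝ} (hr : 0 < r) (hε : 0 < ε) :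
    ∃ n, entourageSeq d n ⊆ entourageDr d r ε := by
  have hr' : ∀ᶠ n : ℕ in Filter.atTop, r ≤ n + 1 :=
    (tendsto_natCast_atTop_atTop.eventually_ge_atTop r).mono fun n hn => by linarith
  have hε' : ∀ᶠ n : ℕ in Filter.atTop, (1 / 8 : ℝ) ^ n ≤ ε :=
    (_root_.tendsto_pow_atTop_nhds_zero_of_lt_one (by norm_num) (by norm_num)).eventually
      (ge_mem_nhds hε)
  obtain ⟨n, hrn, hεn⟩ := (hr'.and hε').exists
  exact ⟨n, h.entourageDr_subset hr hrn hεn⟩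

end WeakerDr

theorem stmt_14 {X : Type*} (d : ℝ → X → X → ℝ≥0∞) (h : WeakerDr d)
    (hnd : ∀ x y : X, (∀ r : ℝ, 0 < r → d r x y = 0) → x = y) :
    ∃ ρ : X → X → ℝ,
      (∀ x y : X, 0 ≤ ρ x y) ∧
      (∀ x : X, ρ x x = 0) ∧
      (∀ x y z : X, ρ x z ≤ ρ x y + ρ y z) ∧
      (∀ x y : X, ρ x y = 0 → x = y) ∧
      (∀ r ε : ℝ, 0 < r → 0 < ε → ∃ ε' : ℝ, 0 < ε' ∧
        ∀ x y : X, ρ x y < ε' → d r x y < ENNReal.ofReal ε) ∧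
      (∀ ε : ℝ, 0 < ε → ∃ r ε' : ℝ, 0 < r ∧ 0 < ε' ∧
        ∀ x y : X, d r x y < ENNReal.ofReal ε' → ρ x y < ε) := by
  set ρ := chainDist (levelDist (entourageSeq d))
  have hW := h.antitone_entourageSeq
  have hsmall : ∀ r ε : ℝ, 0 < r → 0 < ε → ∃ ε' : ℝ, 0 < ε' ∧
      ∀ x y : X, ρ x y < ε' → d r x y < ENNReal.ofReal ε := fun r ε hr hε => by
    obtain ⟨n, hn⟩ := h.exists_entourageSeq_subset hr hε
    exact ⟨(1 / 2) ^ (n + 1), by positivity, fun x y hxy => hn <|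
      mem_of_chainDist_levelDist_lt hW h.self_mem_entourageSeq h.mem_entourageSeq_of_comp₃ hxy⟩
  refine ⟨ρ, chainDist_nonneg levelDist_nonneg,
    chainDist_self levelDist_nonneg (levelDist_self h.self_mem_entourageSeq),
    chainDist_triangle levelDist_nonneg, fun x y hρ => ?_, hsmall, fun ε hε => ?_⟩
  · refine hnd x y fun r hr => ENNReal.eq_zero_of_forall_lt_ofReal fun ε hε => ?_
    obtain ⟨ε', hε', hρε⟩ := hsmall r ε hr hε
    exact hρε x y (hρ ▸ hε')
  · obtain ⟨n, hn⟩ := exists_pow_lt_of_lt_one hε (by norm_num : (1 / 2 : ℝ) < 1)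
    exact ⟨n + 1, (1 / 8) ^ n, by positivity, by positivity, fun x y hxy =>
      (chainDist_levelDist_lt_of_mem hW hxy).trans hn⟩
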